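/- Let p be a prime and b(x) ∈ 𝔽_p(x). Define b_0 = b and b_{k+1} = b_k' + b·b_k. Then b_p(x) = b^{(p−1)}(x) + b(x)^p, where b^{(p−1)} is the (p−1)-st formal derivative of b. -/

import Mathlib

open Polynomial

/-- Formal derivative of a rational function, via the quotient rule on the
canonical numerator/denominator representation. -/
noncomputable def rderiv {F : Type*} [Field F] (f : RatFunc F) : RatFunc F :=
  algebraMap (Polynomial F) (RatFunc F)
      (Polynomial.derivative f.num * f.denom - f.num * Polynomial.derivative f.denom) /
    algebraMap (Polynomial F) (RatFunc F) (f.denom ^ 2)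

/-- The sequence defined by `b₀ = b` and `b_{k+1} = b_k' + b·b_k`; `bseq b (k-1)` is the
constant term of the expansion of `(∂ + b)^k` in `F(x)⟨∂⟩`. -/
noncomputable def bseq {F : Type*} [Field F] (b : RatFunc F) : ℕ → RatFunc F
  | 0 => b
  | k + 1 => rderiv (bseq b k) + b * bseq b k

/-!
`bseq b (p - 1)` is `(D + b)^p 1`, where `D` is the derivation and `b` acts by multiplication.
In `End K` the commutator of `D` with multiplication by `g` is multiplication by `D g`, so `b`
commutes with every `ad_D^k b`, and for such pairs Jacobson's formula collapses to
`(a + c)^p = a^p + c^p + ad_a^{p-1} c`. Applied to `1`, with `D^p 1 = 0`, this is the claim.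

For the collapsed formula put `G = a t + c` in `A[t]`. Then `d/dt G^p = ∑ G^k a G^{p-1-k}`,
which equals `ad_G^{p-1} a` in characteristic `p` because `binom(p-1, k) ≡ (-1)^k`, and this is
`-t^{p-2} ad_a^{p-1} c` when `c` commutes with all `ad_a^k c`. Hence the coefficients of
`t, …, t^{p-2}` in `G^p` vanish, that of `t^{p-1}` is `ad_a^{p-1} c`, and evaluating at `t = 1`
gives the formula.
-/

open Finset LieAlgebra

attribute [local instance] LieRing.ofAssociativeRing

theorem Polynomial.derivative_pow_noncomm {R : Type*} [Semiring R] (f : R[X]) (n : ℕ) :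
    derivative (f ^ n) = ∑ k ∈ range n, f ^ k * derivative f * f ^ (n - 1 - k) := by
  induction n with
  | zero => simp
  | succ n ih =>
    rw [pow_succ, derivative_mul, ih, sum_mul, sum_range_succ, Nat.add_sub_cancel, Nat.sub_self,
      pow_zero, mul_one]
    congr 1
    refine sum_congr rfl fun k hk => ?_
    have hk := mem_range.1 hk
    rw [mul_assoc, ← pow_succ, show n - 1 - k + 1 = n - k by omega]

theorem Polynomial.coeff_succ_eq_inv_smul_coeff_derivative {k A : Type*} [Field k] [Semiring A]
    [Algebra k A] (f : A[X]) {n : ℕ} (hn : ((n + 1 : ℕ) : k) ≠ 0) :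
    f.coeff (n + 1) = ((n + 1 : ℕ) : k)⁻¹ • (derivative f).coeff n := by
  rw [coeff_derivative, ← Nat.cast_succ, ← map_natCast (algebraMap k A), ← Algebra.commutes,
    ← Algebra.smul_def, inv_smul_smul₀ hn]

section Commutator

variable {R A : Type*} [CommRing R] [Ring A] [Algebra R A]

theorem Polynomial.ad_C_mul_X_add_C_apply_C_mul_X_pow (a c x : A) (j : ℕ) :
    ad R A[X] (C a * X + C c) (C x * X ^ j) =
      C (ad R A a x) * X ^ (j + 1) + C (ad R A c x) * X ^ j := by
  simp only [ad_apply, LieRing.of_associative_ring_bracket]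
  rw [C_mul_X_eq_monomial, C_mul_X_pow_eq_monomial, C_mul_X_pow_eq_monomial,
    C_mul_X_pow_eq_monomial, ← monomial_zero_left (a := c)]
  simp only [add_mul, mul_add, monomial_mul_monomial, map_sub, zero_add, add_zero, add_comm 1 j]
  abel

theorem Polynomial.ad_C_mul_X_add_C_pow_succ_apply_C {a c : A}
    (h : ∀ k, Commute c ((ad R A a ^ k) c)) (k : ℕ) :
    (ad R A[X] (C a * X + C c) ^ (k + 1)) (C a) = -(C ((ad R A a ^ (k + 1)) c) * X ^ k) := by
  induction k with
  | zero =>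
    have := ad_C_mul_X_add_C_apply_C_mul_X_pow (R := R) a c a 0
    simp only [pow_zero, mul_one, zero_add, pow_one] at this ⊢
    rw [this, ad_apply, ad_apply, ad_apply, lie_self, C_0, zero_mul, zero_add, ← lie_skew,
      map_neg]
  | succ k ih =>
    rw [pow_succ', Module.End.mul_apply, ih, map_neg, ad_C_mul_X_add_C_apply_C_mul_X_pow,
      ad_apply R A c, LieRing.of_associative_ring_bracket, (h (k + 1)).eq, sub_self, C_0,
      zero_mul, add_zero, ← Module.End.mul_apply, ← pow_succ']

end Commutator

section CharP

variable {p : ℕ} [Fact p.Prime]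

theorem ZMod.natCast_choose_sub_one {k : ℕ} (hk : k < p) :
    ((p - 1).choose k : ZMod p) = (-1) ^ k := by
  induction k with
  | zero => simp
  | succ k ih =>
    have hpascal : (p - 1).choose k + (p - 1).choose (k + 1) = p.choose (k + 1) := by
      conv_rhs => rw [← Nat.sub_add_cancel (Fact.out : p.Prime).one_le]
      exact (Nat.choose_succ_succ _ k).symm
    have hdvd : ((p.choose (k + 1) : ℕ) : ZMod p) = 0 :=
      (ZMod.natCast_eq_zero_iff _ _).2 ((Fact.out : p.Prime).dvd_choose_self k.succ_ne_zero hk)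
    rw [← hpascal, Nat.cast_add, ih (by omega)] at hdvd
    rw [pow_succ]
    linear_combination hdvd

variable {A : Type*} [Ring A] [Algebra (ZMod p) A]

theorem Commute.sub_pow_sub_one_eq_sum {u v : A} (h : Commute u v) :
    (u - v) ^ (p - 1) = ∑ k ∈ range p, u ^ k * v ^ (p - 1 - k) := by
  have hp := (Fact.out : p.Prime).one_le
  rw [sub_eq_add_neg, h.neg_right.add_pow, Nat.sub_add_cancel hp]
  refine sum_congr rfl fun k hk => ?_
  have hk := mem_range.1 hk
  have hsign : ((-1) ^ (p - 1 - k) * (p - 1).choose k : ZMod p) = 1 := by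
    rw [ZMod.natCast_choose_sub_one hk, ← pow_add, Nat.sub_add_cancel (by omega),
      ZMod.pow_card_sub_one_eq_one (neg_ne_zero.2 one_ne_zero)]
  have := congrArg (algebraMap (ZMod p) A) hsign
  simp only [map_mul, map_pow, map_neg, map_one, map_natCast] at this
  rw [neg_pow, mul_assoc, mul_assoc, ← (Nat.cast_commute _ _).eq, ← mul_assoc ((-1) ^ _), this,
    one_mul]

theorem sum_pow_mul_pow_eq_ad_pow (x y : A) :
    ∑ k ∈ range p, x ^ k * y * x ^ (p - 1 - k) = (ad (ZMod p) A x ^ (p - 1)) y := by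
  rw [ad_eq_lmul_left_sub_lmul_right, Pi.sub_apply,
    (LinearMap.commute_mulLeft_right x x).sub_pow_sub_one_eq_sum, LinearMap.sum_apply]
  simp [LinearMap.pow_mulLeft, LinearMap.pow_mulRight, mul_assoc]

theorem Polynomial.eval_one_eq_of_derivative_eq {f : A[X]} (hdeg : f.natDegree ≤ p) {d : A}
    (hd : derivative f = -(C d * X ^ (p - 2))) :
    f.eval 1 = f.coeff 0 + d + f.coeff p := by
  have hp := (Fact.out : p.Prime).two_le
  have hmid : ∑ n ∈ range (p - 1), f.coeff (n + 1) = d := by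
    rw [sum_eq_single_of_mem (p - 2) (mem_range.2 (by omega))]
    · have hcast : ((p - 2 + 1 : ℕ) : ZMod p) = -1 := by
        rw [eq_neg_iff_add_eq_zero, ← Nat.cast_add_one, ZMod.natCast_eq_zero_iff]
        exact ⟨1, by omega⟩
      rw [coeff_succ_eq_inv_smul_coeff_derivative f (k := ZMod p) (by rw [hcast]; simp), hcast, hd,
        coeff_neg, coeff_C_mul_X_pow, if_pos rfl, inv_neg, inv_one, neg_one_smul, neg_neg]
    · intro n hn hne
      have hunit : ((n + 1 : ℕ) : ZMod p) ≠ 0 := by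
        rw [Ne, ZMod.natCast_eq_zero_iff]
        exact Nat.not_dvd_of_pos_of_lt n.succ_pos (by have := mem_range.1 hn; omega)
      rw [coeff_succ_eq_inv_smul_coeff_derivative f hunit, hd, coeff_neg, coeff_C_mul_X_pow,
        if_neg hne, neg_zero, smul_zero]
  rw [eval_eq_sum_range' (Nat.lt_succ_of_le hdeg), sum_range_succ,
    ← Nat.sub_add_cancel (by omega : 1 ≤ p), sum_range_succ']
  simp only [one_pow, mul_one, Nat.sub_add_cancel (by omega : 1 ≤ p), hmid]
  abel

theorem add_pow_char_of_commute_ad_pow {a c : A} (h : ∀ k, Commute c ((ad (ZMod p) A a ^ k) c)) :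
    (a + c) ^ p = a ^ p + c ^ p + (ad (ZMod p) A a ^ (p - 1)) c := by
  have hp := (Fact.out : p.Prime).two_le
  set G : A[X] := C a * X + C c
  have hdeg : G.natDegree ≤ 1 := natDegree_linear_le
  have heval : (G ^ p).eval 1 = (a + c) ^ p := by
    change eval₂RingHom' (RingHom.id A) 1 (fun x => Commute.one_right x) (G ^ p) = _
    rw [map_pow]
    simp [G]
  have hderiv : derivative (G ^ p) = -(C ((ad (ZMod p) A a ^ (p - 1)) c) * X ^ (p - 2)) := by
    rw [derivative_pow_noncomm, show derivative G = C a by simp [G], sum_pow_mul_pow_eq_ad_pow,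
      show p - 1 = p - 2 + 1 by omega, ad_C_mul_X_add_C_pow_succ_apply_C h]
  have htop : (G ^ p).coeff p = a ^ p := by
    simpa [G] using coeff_pow_of_natDegree_le (m := p) hdeg
  have hbot : (G ^ p).coeff 0 = c ^ p := by
    rw [← constantCoeff_apply, map_pow]
    simp [G, constantCoeff_apply]
  have hdegp : (G ^ p).natDegree ≤ p :=
    natDegree_pow_le.trans (by simpa using Nat.mul_le_mul_left p hdeg)
  rw [← heval, eval_one_eq_of_derivative_eq hdegp hderiv, htop, hbot]
  abel

end CharP

section Derivation

variable {R K : Type*} [CommRing R] [CommRing K] [Algebra R K] (D : Derivation R K K)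

theorem Derivation.ad_mulLeft (f : K) :
    ad R (Module.End R K) D (LinearMap.mulLeft R f) = LinearMap.mulLeft R (D f) := by
  ext g
  simp [ad_apply, LieRing.of_associative_ring_bracket, D.leibniz, mul_comm]

theorem Derivation.ad_pow_mulLeft (f : K) (k : ℕ) :
    (ad R (Module.End R K) D ^ k) (LinearMap.mulLeft R f) = LinearMap.mulLeft R (D^[k] f) := by
  induction k with
  | zero => rfl
  | succ k ih =>
    rw [pow_succ', Module.End.mul_apply, ih, D.ad_mulLeft, Function.iterate_succ_apply']

end Derivation

theorem Derivation.iterate_add_mul_apply_one {p : ℕ} [Fact p.Prime] {K : Type*} [CommRing K]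
    [Algebra (ZMod p) K] (D : Derivation (ZMod p) K K) (b : K) :
    (fun f => D f + b * f)^[p] 1 = D^[p - 1] b + b ^ p := by
  have hcomm (k : ℕ) : Commute (LinearMap.mulLeft (ZMod p) b)
      ((ad (ZMod p) (Module.End (ZMod p) K) D ^ k) (LinearMap.mulLeft (ZMod p) b)) := by
    rw [D.ad_pow_mulLeft]
    exact (Commute.all b _).map (Algebra.lmul (ZMod p) K)
  have hDp : D^[p - 1 + 1] 1 = 0 := by
    rw [Function.iterate_succ_apply, D.map_one_eq_zero, iterate_map_zero]
  rw [Nat.sub_add_cancel (Fact.out : p.Prime).one_le] at hDp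
  have hL : (fun f => D f + b * f) =
      ⇑((D : Module.End (ZMod p) K) + LinearMap.mulLeft (ZMod p) b) := rfl
  rw [hL, ← Module.End.pow_apply, add_pow_char_of_commute_ad_pow hcomm]
  simp only [LinearMap.add_apply, Module.End.pow_apply, Derivation.coeFn_coe, hDp,
    LinearMap.pow_mulLeft, D.ad_pow_mulLeft, LinearMap.mulLeft_apply, mul_one, zero_add]
  exact add_comm _ _

section RatFunc

variable {F : Type*} [Field F]

local notation "ι" => algebraMap F[X] (RatFunc F)

theorem rderiv_algebraMap_div_algebraMap (a c : F[X]) (hc : c ≠ 0) :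
    rderiv (ι a / ι c) = ι (derivative a * c - a * derivative c) / ι (c ^ 2) := by
  set f := ι a / ι c
  have hden : f.denom ≠ 0 := f.denom_ne_zero
  have hcross : f.num * c = a * f.denom := by
    apply RatFunc.algebraMap_injective F
    rw [map_mul, map_mul, ← div_eq_div_iff (RatFunc.algebraMap_ne_zero hden)
      (RatFunc.algebraMap_ne_zero hc), RatFunc.num_div_denom]
  have hcross' : derivative f.num * c + f.num * derivative c =
      derivative a * f.denom + a * derivative f.denom := by
    simpa [derivative_mul] using congrArg derivative hcross
  rw [rderiv, div_eq_div_iff (RatFunc.algebraMap_ne_zero (pow_ne_zero 2 hden))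
    (RatFunc.algebraMap_ne_zero (pow_ne_zero 2 hc)), ← map_mul, ← map_mul]
  congr 1
  apply mul_left_cancel₀ hc
  linear_combination (f.denom * c ^ 2) * hcross' -
    (derivative f.denom * c ^ 2 + derivative c * c * f.denom) * hcross

theorem rderiv_algebraMap (q : F[X]) : rderiv (ι q) = ι (derivative q) := by
  simpa using rderiv_algebraMap_div_algebraMap q 1 one_ne_zero

theorem rderiv_add (f g : RatFunc F) : rderiv (f + g) = rderiv f + rderiv g := by
  have hf := f.denom_ne_zero
  have hg := g.denom_ne_zero
  have hf' := RatFunc.algebraMap_ne_zero hf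
  have hg' := RatFunc.algebraMap_ne_zero hg
  rw [← f.num_div_denom, ← g.num_div_denom, div_add_div _ _ hf' hg', ← map_mul, ← map_mul,
    ← map_mul, ← map_add, rderiv_algebraMap_div_algebraMap _ _ (mul_ne_zero hf hg),
    rderiv_algebraMap_div_algebraMap _ _ hf, rderiv_algebraMap_div_algebraMap _ _ hg]
  simp only [derivative_mul, map_mul, map_sub, map_add, map_pow]
  field_simp
  ring

theorem rderiv_mul (f g : RatFunc F) : rderiv (f * g) = rderiv f * g + f * rderiv g := by
  have hf := f.denom_ne_zero
  have hg := g.denom_ne_zero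
  have hf' := RatFunc.algebraMap_ne_zero hf
  have hg' := RatFunc.algebraMap_ne_zero hg
  rw [← f.num_div_denom, ← g.num_div_denom, div_mul_div_comm, ← map_mul, ← map_mul,
    rderiv_algebraMap_div_algebraMap _ _ (mul_ne_zero hf hg),
    rderiv_algebraMap_div_algebraMap _ _ hf, rderiv_algebraMap_div_algebraMap _ _ hg]
  simp only [derivative_mul, map_mul, map_sub, map_add, map_pow]
  field_simp
  ring

theorem rderiv_smul (c : F) (f : RatFunc F) : rderiv (c • f) = c • rderiv f := by
  rw [Algebra.smul_def, Algebra.smul_def, IsScalarTower.algebraMap_apply F F[X] (RatFunc F),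
    rderiv_mul, rderiv_algebraMap, algebraMap_eq, derivative_C, map_zero, zero_mul, zero_add]

variable (F) in
noncomputable def RatFunc.derivation : Derivation F (RatFunc F) (RatFunc F) :=
  Derivation.mk' ⟨⟨rderiv, rderiv_add⟩, rderiv_smul⟩ fun f g => by
    rw [smul_eq_mul, smul_eq_mul, LinearMap.coe_mk, AddHom.coe_mk, rderiv_mul, mul_comm g, add_comm]

theorem RatFunc.coe_derivation : ⇑(RatFunc.derivation F) = rderiv := rfl

theorem bseq_eq_iterate (b : RatFunc F) (n : ℕ) :
    bseq b n = (fun f => rderiv f + b * f)^[n + 1] 1 := by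
  induction n with
  | zero => simp [bseq, ← RatFunc.coe_derivation]
  | succ n ih => rw [Function.iterate_succ_apply', ← ih, bseq]

end RatFunc

/-- **Jacobson's formula in rank one**: for a prime `p` and `b(x) ∈ 𝔽_p(x)`, the
`p`-curvature of `∂ + b(x)` (the constant term `b_p` of `(∂ + b)^p`, obtained after
`p − 1` steps of the recurrence `b ↦ b' + b·b` starting from `b`) is given by the
closed formula `b_p(x) = b^{(p−1)}(x) + b(x)^p`. -/
theorem jacobson_formula (p : ℕ) [Fact p.Prime] (b : RatFunc (ZMod p)) :
    bseq b (p - 1) = rderiv^[p - 1] b + b ^ p := by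
  rw [bseq_eq_iterate, Nat.sub_add_cancel (Fact.out : p.Prime).one_le]
  exact (RatFunc.derivation (ZMod p)).iterate_add_mul_apply_one b
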